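/- For ε > 0 define F₁(ε) := (1/(2πε)) ∫_ℝ exp( −(1 − ε² (m² − 1)/2)² / (2ε²) − m²/2 ) dm, which is the value at y = 1 of the (continuous) probability density of the random variable ε N + ε² (M² − 1)/2, where N, M are independent standard normal random variables. Then there exists a constant c₀ > 0 such that ε^{3/2} · e^{1/(2ε²)} · F₁(ε) → c₀ as ε ↓ 0; i.e. F₁(ε) = ε^{−3/2} e^{−1/(2ε²)} (c₀ + o(1)). -/

import Mathlib

open MeasureTheory

/-- The density at `y = 1` of `εN + ε²(M²−1)/2` (N, M independent standard normals),
written as a convolution integral. -/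
noncomputable def Fdens1 (ε : ℝ) : ℝ :=
  (1 / (2 * Real.pi * ε)) *
    ∫ m : ℝ, Real.exp (-(1 - ε ^ 2 * (m ^ 2 - 1) / 2) ^ 2 / (2 * ε ^ 2) - m ^ 2 / 2)

/-!
Expanding the square, the exponent of `Fdens1 ε` is `-1/(2ε²) - 1/2 - ε²(m² - 1)²/8`: the
linear term `(m² - 1)/2` cancels the Gaussian weight `-m²/2` up to a constant, so no
Gaussian decay in `m` is left and the integrand is flat over the range `m ≲ ε^{-1/2}`
(the degenerate minimizer). The substitution `u = √ε m` gives
`Fdens1 ε = e^{-1/(2ε²) - 1/2} / (2π ε^{3/2}) · ∫ exp (-(u² - ε)²/8) du`,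
and by dominated convergence that integral tends to `∫ exp (-u⁴/8) du > 0` as `ε → 0`.
-/

open Real

noncomputable def quarticGaussIntegral (ε : ℝ) : ℝ :=
  ∫ u : ℝ, exp (-(u ^ 2 - ε) ^ 2 / 8)

lemma exp_neg_sq_sub_sq_div_eight_le {ε : ℝ} (hε : |ε| ≤ 1) (u : ℝ) :
    exp (-(u ^ 2 - ε) ^ 2 / 8) ≤ exp (17 / 4) * exp (-u ^ 2) := by
  rw [← exp_add, exp_le_exp]
  have hu : u ^ 2 * ε ≤ u ^ 2 := by
    nlinarith [(abs_le.mp hε).2, sq_nonneg u]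
  -- the difference of exponents is at least `((u² - 5)² + 9) / 8`
  nlinarith [sq_nonneg (u ^ 2 - 5), sq_nonneg ε]

lemma integrable_const_mul_exp_neg_sq (c : ℝ) : Integrable fun u : ℝ => c * exp (-u ^ 2) :=
  (by simpa using integrable_exp_neg_mul_sq one_pos : Integrable fun u : ℝ => exp (-u ^ 2))
    |>.const_mul _

lemma continuousAt_quarticGaussIntegral_zero : ContinuousAt quarticGaussIntegral 0 := by
  refine continuousAt_of_dominated (bound := fun u => exp (17 / 4) * exp (-u ^ 2))
    (.of_forall fun ε => by fun_prop) ?_ (integrable_const_mul_exp_neg_sq _)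
    (.of_forall fun u => by fun_prop)
  filter_upwards [Metric.closedBall_mem_nhds (0 : ℝ) one_pos] with ε hε
  refine .of_forall fun u => ?_
  rw [norm_of_nonneg (exp_pos _).le]
  exact exp_neg_sq_sub_sq_div_eight_le (by simpa using hε) u

lemma quarticGaussIntegral_zero_pos : 0 < quarticGaussIntegral 0 :=
  integral_exp_pos <| (integrable_const_mul_exp_neg_sq (exp (17 / 4))).mono (by fun_prop) <|
    .of_forall fun u => by
      rw [norm_of_nonneg (by positivity), norm_of_nonneg (by positivity)]
      exact exp_neg_sq_sub_sq_div_eight_le (by simp) u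

lemma Fdens1_exponent_eq {ε : ℝ} (hε : 0 < ε) (m : ℝ) :
    -(1 - ε ^ 2 * (m ^ 2 - 1) / 2) ^ 2 / (2 * ε ^ 2) - m ^ 2 / 2
      = -1 / (2 * ε ^ 2) - 1 / 2 + -((√ε * m) ^ 2 - ε) ^ 2 / 8 := by
  rw [mul_pow, sq_sqrt hε.le]
  field_simp
  ring

lemma integral_exp_Fdens1_exponent {ε : ℝ} (hε : 0 < ε) :
    ∫ m : ℝ, exp (-(1 - ε ^ 2 * (m ^ 2 - 1) / 2) ^ 2 / (2 * ε ^ 2) - m ^ 2 / 2)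
      = exp (-1 / (2 * ε ^ 2) - 1 / 2) * ((√ε)⁻¹ * quarticGaussIntegral ε) := by
  simp_rw [Fdens1_exponent_eq hε, exp_add]
  rw [integral_const_mul, Measure.integral_comp_mul_left (fun u => exp (-(u ^ 2 - ε) ^ 2 / 8)),
    smul_eq_mul, abs_of_pos (inv_pos.mpr (sqrt_pos.mpr hε)), quarticGaussIntegral]

lemma rpow_three_halves_mul_exp_mul_Fdens1 {ε : ℝ} (hε : 0 < ε) :
    ε ^ ((3 : ℝ) / 2) * exp (1 / (2 * ε ^ 2)) * Fdens1 ε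
      = exp (-1 / 2) / (2 * π) * quarticGaussIntegral ε := by
  have h32 : ε ^ ((3 : ℝ) / 2) = ε * √ε := by
    rw [show (3 : ℝ) / 2 = 1 + 1 / 2 by norm_num, rpow_add hε, rpow_one, ← sqrt_eq_rpow]
  have hexp : exp (1 / (2 * ε ^ 2)) * exp (-1 / (2 * ε ^ 2) - 1 / 2) = exp (-1 / 2) := by
    rw [← exp_add]; ring_nf
  rw [Fdens1, integral_exp_Fdens1_exponent hε, h32, ← hexp]
  have : √ε ≠ 0 := (sqrt_pos.mpr hε).ne'
  field_simp

/-- In the focal case `θ = 1` one has `F₁(ε) = ε^{−3/2} e^{−1/(2ε²)} (c₀ + o(1))`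
as `ε ↓ 0` for some constant `c₀ > 0`. -/
theorem stmt_11 :
    ∃ c₀ : ℝ, 0 < c₀ ∧
      Filter.Tendsto (fun ε : ℝ => ε ^ ((3:ℝ)/2) * Real.exp (1 / (2 * ε ^ 2)) * Fdens1 ε)
        (nhdsWithin 0 (Set.Ioi 0)) (nhds c₀) := by
  refine ⟨exp (-1 / 2) / (2 * π) * quarticGaussIntegral 0,
    mul_pos (by positivity) quarticGaussIntegral_zero_pos, ?_⟩
  refine ((continuousAt_quarticGaussIntegral_zero.tendsto.mono_left nhdsWithin_le_nhds).const_mul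
    _).congr' ?_
  filter_upwards [self_mem_nhdsWithin] with ε hε
  exact (rpow_three_halves_mul_exp_mul_Fdens1 hε).symm
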